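/- In the setting of the block factorization (V a complex vector space, L₀, P : V → V linear, c : V → V invertible linear, L_s = L₀ + s·(c∘P) − s²·c, 𝒜(Ψ,Ψ') = (Ψ', c⁻¹(L₀Ψ) + PΨ')): if L_s : V → V is bijective with inverse L_s⁻¹, then the operator ℛ(s) := [[id, 0],[s·id, id]] ∘ [[L_s⁻¹ ∘ c, 0],[0, id]] ∘ [[−(P − s·id), id],[id, 0]] on V × V is a two-sided inverse of 𝒜 − s·id. -/

import Mathlib

/-- A block operator `[[A,B],[C,D]]` acting on `V × V` by
`(f,g) ↦ (Af + Bg, Cf + Dg)`. -/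
def blockOp {V : Type*} [AddCommGroup V] (A B C D : V → V) :
    V × V → V × V :=
  fun p => (A p.1 + B p.2, C p.1 + D p.2)

/-!
Writing `𝒜 - s = [[0, id], [id, P - s]] ∘ [[c⁻¹ ∘ L_s, 0], [0, id]] ∘ [[id, 0], [-s, id]]`,
each factor is invertible with an explicit block inverse, and `ℛ(s)` is the product of these
inverses in reverse order.
-/

open Function

section BlockOp

variable {V : Type*} [AddCommGroup V]

theorem blockOp_apply (A B C D : V → V) (f g : V) :
    blockOp A B C D (f, g) = (A f + B g, C f + D g) := rfl

theorem leftInverse_blockOp_swap (Q : V → V) :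
    LeftInverse (blockOp (fun v => -Q v) (fun v => v) (fun v => v) (fun _ => 0))
      (blockOp (fun _ => 0) (fun v => v) (fun v => v) Q) := by
  rintro ⟨f, g⟩
  simp only [blockOp_apply, zero_add, add_zero, Prod.mk.injEq, and_true]
  abel

theorem rightInverse_blockOp_swap (Q : V → V) :
    RightInverse (blockOp (fun v => -Q v) (fun v => v) (fun v => v) (fun _ => 0))
      (blockOp (fun _ => 0) (fun v => v) (fun v => v) Q) := by
  rintro ⟨f, g⟩
  simp only [blockOp_apply, zero_add, add_zero, Prod.mk.injEq, true_and]
  abel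

theorem leftInverse_blockOp_shear (K : V → V) :
    LeftInverse (blockOp (fun v => v) (fun _ => 0) K (fun v => v))
      (blockOp (fun v => v) (fun _ => 0) (fun v => -K v) (fun v => v)) := by
  rintro ⟨f, g⟩
  simp only [blockOp_apply, add_zero, add_neg_cancel_left]

theorem rightInverse_blockOp_shear (K : V → V) :
    RightInverse (blockOp (fun v => v) (fun _ => 0) K (fun v => v))
      (blockOp (fun v => v) (fun _ => 0) (fun v => -K v) (fun v => v)) := by
  rintro ⟨f, g⟩
  simp only [blockOp_apply, add_zero, neg_add_cancel_left]

theorem Function.LeftInverse.blockOp_diag {A B : V → V} (h : LeftInverse A B) :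
    LeftInverse (blockOp A (fun _ => 0) (fun _ => 0) (fun v => v))
      (blockOp B (fun _ => 0) (fun _ => 0) (fun v => v)) := by
  rintro ⟨f, g⟩
  simp only [blockOp_apply, add_zero, zero_add, h f]

end BlockOp

theorem generator_sub_smul_eq_blockOp {R V : Type*} [CommRing R] [AddCommGroup V] [Module R V]
    (L₀ P : V →ₗ[R] V) (c : V ≃ₗ[R] V) (s : R) (p : V × V) :
    (p.2, c.symm (L₀ p.1) + P p.2) - s • p =
      blockOp (fun _ => 0) (fun v => v) (fun v => v) (fun v => P v - s • v)
        (blockOp (fun v => c.symm (L₀ v + s • c (P v) - s ^ 2 • c v)) (fun _ => 0) (fun _ => 0)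
          (fun v => v)
          (blockOp (fun v => v) (fun _ => 0) (fun v => -(s • v)) (fun v => v) p)) := by
  obtain ⟨f, g⟩ := p
  ext <;> simp only [blockOp_apply, Prod.smul_mk, Prod.mk_sub_mk, map_add, map_sub, map_smul,
    map_neg, LinearEquiv.symm_apply_apply, add_zero, zero_add] <;> module

/-- Explicit resolvent of the infinitesimal generator: if `L_s` is bijective with
inverse `L_s⁻¹`, then
`ℛ(s) = [[id, 0],[s·id, id]] ∘ [[L_s⁻¹ ∘ c, 0],[0, id]] ∘ [[−(P − s·id), id],[id, 0]]`
is a two-sided inverse of `𝒜 − s·id`. -/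
theorem stmt_14 {V : Type*} [AddCommGroup V] [Module ℂ V]
    (L₀ P : V →ₗ[ℂ] V) (c : V ≃ₗ[ℂ] V) (s : ℂ)
    (Ls Lsinv : V → V)
    (hLs : Ls = fun v => L₀ v + s • c (P v) - s ^ 2 • c v)
    (hleft : Function.LeftInverse Lsinv Ls)
    (hright : Function.RightInverse Lsinv Ls)
    (𝒜 : V × V → V × V)
    (h𝒜 : 𝒜 = fun p => (p.2, c.symm (L₀ p.1) + P p.2))
    (R : V × V → V × V)
    (hR : R = fun p =>
      blockOp (fun v => v) (fun _ => 0) (fun v => s • v) (fun v => v)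
        (blockOp (fun v => Lsinv (c v)) (fun _ => 0) (fun _ => 0) (fun v => v)
          (blockOp (fun v => -(P v - s • v)) (fun v => v) (fun v => v) (fun _ => 0) p))) :
    (∀ p : V × V, 𝒜 (R p) - s • R p = p) ∧
    (∀ p : V × V, R (𝒜 p - s • p) = p) := by
  subst hLs h𝒜 hR
  have hdiag_left : LeftInverse (fun v => Lsinv (c v))
      (fun v => c.symm (L₀ v + s • c (P v) - s ^ 2 • c v)) := fun v => by
    simp only [LinearEquiv.apply_symm_apply, hleft v]
  have hdiag_right : RightInverse (fun v => Lsinv (c v))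
      (fun v => c.symm (L₀ v + s • c (P v) - s ^ 2 • c v)) := fun v => by
    simp only [hright (c v), LinearEquiv.symm_apply_apply]
  refine ⟨fun p => ?_, fun p => ?_⟩
  · beta_reduce
    rw [generator_sub_smul_eq_blockOp]
    exact (((rightInverse_blockOp_swap _).comp hdiag_right.blockOp_diag).comp
      (rightInverse_blockOp_shear _)) p
  · beta_reduce
    rw [generator_sub_smul_eq_blockOp]
    exact (((leftInverse_blockOp_swap _).comp hdiag_left.blockOp_diag).comp
      (leftInverse_blockOp_shear _)) p
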